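/- Under the stated hypotheses, the ratio Q(x)/Δ(x) tends to J as x → b⁻. -/

import Mathlib

/-!
Write `Q / Δ = (2J/σ²) · F / G` with `F x = ∫_x^b e^z / Δ` and `G = Δ e^z`. With `k = 2/σ²`
we have `z' = -k/Δ²`, so `(e^z/Δ²)' = -e^z (k + 2ΔΔ')/Δ⁴`, which is negative near `b` because
`ΔΔ' → 0` there. Hence `e^z = O(Δ²)` at `b⁻`, so `F` and `G` tend to `0` and L'Hôpital's rule
applies: `F'/G' = 1/(k - ΔΔ') → 1/k`.
-/

open Real Filter Set Topology intervalIntegral MeasureTheory Asymptotics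

theorem DifferentiableOn.hasDerivAt_derivWithin {𝕜 F : Type*} [NontriviallyNormedField 𝕜]
    [NormedAddCommGroup F] [NormedSpace 𝕜 F] {f : 𝕜 → F} {s : Set 𝕜} {x : 𝕜}
    (hf : DifferentiableOn 𝕜 f s) (hs : s ∈ 𝓝 x) : HasDerivAt f (derivWithin f s x) x := by
  rw [derivWithin_of_mem_nhds hs]
  exact (hf.differentiableAt hs).hasDerivAt

section

variable {E : Type*} [NormedAddCommGroup E] {f : ℝ → E} {l b : ℝ}

theorem hasDerivAt_integral_of_continuousOn_Ioo [NormedSpace ℝ E] [CompleteSpace E] {c x : ℝ}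
    (hf : ContinuousOn f (Ioo l b)) (hc : c ∈ Ioo l b) (hx : x ∈ Ioo l b) :
    HasDerivAt (fun y => ∫ t in c..y, f t) (f x) x :=
  integral_hasDerivAt_right ((hf.mono (ordConnected_Ioo.uIcc_subset hc hx)).intervalIntegrable)
    (hf.stronglyMeasurableAtFilter isOpen_Ioo x hx) (hf.continuousAt (Ioo_mem_nhds hx.1 hx.2))

theorem eventually_integrableOn_Icc_of_tendsto_nhdsLT {y : E} (hl : l < b)
    (hf : ContinuousOn f (Ioo l b)) (hfy : Tendsto f (𝓝[<] b) (𝓝 y)) :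
    ∀ᶠ x in 𝓝[<] b, IntegrableOn f (Icc x b) := by
  obtain ⟨m, hm, hbdd⟩ := mem_nhdsLT_iff_exists_Ioo_subset.mp
    (hfy.norm.eventually_le_const (lt_add_one ‖y‖))
  filter_upwards [Ioo_mem_nhdsLT (max_lt hl hm)] with x hx
  have hxb : Ioo x b ⊆ Ioo l b ∩ Ioo m b := fun t ht =>
    ⟨⟨(le_max_left _ _).trans_lt (hx.1.trans ht.1), ht.2⟩,
      ⟨(le_max_right _ _).trans_lt (hx.1.trans ht.1), ht.2⟩⟩
  rw [integrableOn_Icc_iff_integrableOn_Ioo]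
  exact .of_bound measure_Ioo_lt_top
    ((hf.mono fun t ht => (hxb ht).1).aestronglyMeasurable measurableSet_Ioo) _
    ((ae_restrict_iff' measurableSet_Ioo).mpr (ae_of_all _ fun t ht => hbdd (hxb ht).2))

theorem tendsto_integral_nhdsLT_of_integrableOn [NormedSpace ℝ E] [CompleteSpace E]
    (hf : ∀ᶠ x in 𝓝[<] b, IntegrableOn f (Icc x b)) :
    Tendsto (fun x => ∫ t in x..b, f t) (𝓝[<] b) (𝓝 0) := by
  obtain ⟨x, hint, hxb⟩ := (hf.and self_mem_nhdsWithin).exists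
  have hcont := continuousOn_primitive_interval_left (uIcc_of_le hxb.le ▸ hint)
  rw [uIcc_of_le hxb.le] at hcont
  simpa using ((hcont b ⟨hxb.le, le_rfl⟩).mono_of_mem_nhdsWithin (Icc_mem_nhdsLT hxb)).tendsto

end

section

variable {Δ φ z : ℝ → ℝ} {k l b : ℝ}

theorem antitoneOn_exp_div_sq (hΔ' : ∀ x ∈ Ioo l b, HasDerivAt Δ (φ x) x)
    (hz' : ∀ x ∈ Ioo l b, HasDerivAt z (-k / Δ x ^ 2) x) (hpos : ∀ x ∈ Ioo l b, 0 < Δ x)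
    (hk : ∀ x ∈ Ioo l b, -k ≤ 2 * (Δ x * φ x)) :
    AntitoneOn (fun x => exp (z x) / Δ x ^ 2) (Ioo l b) := by
  have hderiv : ∀ x ∈ Ioo l b, HasDerivAt (fun x => exp (z x) / Δ x ^ 2)
      (-(exp (z x) * (k + 2 * (Δ x * φ x)) / Δ x ^ 4)) x := by
    intro x hx
    have hΔx := (hpos x hx).ne'
    refine (((hz' x hx).exp).div ((hΔ' x hx).pow 2) (pow_ne_zero 2 hΔx)).congr_deriv ?_
    simp only [Pi.pow_apply]
    field_simp
    ring
  refine antitoneOn_of_hasDerivWithinAt_nonpos (convex_Ioo l b)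
    (f' := fun x => -(exp (z x) * (k + 2 * (Δ x * φ x)) / Δ x ^ 4))
    (fun x hx => (hderiv x hx).continuousAt.continuousWithinAt) (fun x hx => ?_) (fun x hx => ?_)
  · rw [interior_Ioo] at hx ⊢
    exact (hderiv x hx).hasDerivWithinAt
  · rw [interior_Ioo] at hx
    have hkx := hk x hx
    have hΔx := hpos x hx
    rw [neg_nonpos]
    exact div_nonneg (mul_nonneg (exp_pos _).le (by linarith)) (by positivity)

theorem exp_isBigO_sq (hl : l < b) (hk : 0 < k) (hΔ' : ∀ x ∈ Ioo l b, HasDerivAt Δ (φ x) x)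
    (hz' : ∀ x ∈ Ioo l b, HasDerivAt z (-k / Δ x ^ 2) x) (hpos : ∀ x ∈ Ioo l b, 0 < Δ x)
    (hΔφ : Tendsto (fun x => Δ x * φ x) (𝓝[<] b) (𝓝 0)) :
    (fun x => exp (z x)) =O[𝓝[<] b] (fun x => Δ x ^ 2) := by
  obtain ⟨m, hm, hsmall⟩ := mem_nhdsLT_iff_exists_Ioo_subset.mp
    (hΔφ.eventually_const_lt (by linarith : -(k / 2) < 0))
  have hsub : Ioo (max l m) b ⊆ Ioo l b := Ioo_subset_Ioo_left (le_max_left _ _)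
  have hanti := antitoneOn_exp_div_sq (fun x hx => hΔ' x (hsub hx)) (fun x hx => hz' x (hsub hx))
    (fun x hx => hpos x (hsub hx)) fun x hx => by
      have : -(k / 2) < Δ x * φ x := hsmall (Ioo_subset_Ioo_left (le_max_right _ _) hx)
      linarith
  obtain ⟨x₀, hx₀⟩ := nonempty_Ioo.mpr (max_lt hl hm)
  refine IsBigO.of_bound (exp (z x₀) / Δ x₀ ^ 2) ?_
  filter_upwards [Ioo_mem_nhdsLT hx₀.2] with t ht
  have ht' : t ∈ Ioo (max l m) b := ⟨hx₀.1.trans ht.1, ht.2⟩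
  have hΔt := hpos t (hsub ht')
  have hle := hanti hx₀ ht' ht.1.le
  rw [norm_of_nonneg (exp_pos _).le, norm_of_nonneg (by positivity)]
  rwa [div_le_iff₀ (by positivity)] at hle

theorem tendsto_integral_exp_div_div_mul_exp (hl : l < b) (hk : 0 < k)
    (hΔ' : ∀ x ∈ Ioo l b, HasDerivAt Δ (φ x) x)
    (hz' : ∀ x ∈ Ioo l b, HasDerivAt z (-k / Δ x ^ 2) x) (hpos : ∀ x ∈ Ioo l b, 0 < Δ x)
    (hΔ : Tendsto Δ (𝓝[<] b) (𝓝 0)) (hΔφ : Tendsto (fun x => Δ x * φ x) (𝓝[<] b) (𝓝 0)) :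
    Tendsto (fun x => (∫ t in x..b, exp (z t) / Δ t) / (Δ x * exp (z x))) (𝓝[<] b)
      (𝓝 k⁻¹) := by
  have hlb : Ioo l b ∈ 𝓝[<] b := Ioo_mem_nhdsLT hl
  have hO := exp_isBigO_sq hl hk hΔ' hz' hpos hΔφ
  have hf_cont : ContinuousOn (fun t => exp (z t) / Δ t) (Ioo l b) := fun x hx =>
    ((hz' x hx).continuousAt.rexp.div (hΔ' x hx).continuousAt
      (hpos x hx).ne').continuousWithinAt
  have hf0 : Tendsto (fun t => exp (z t) / Δ t) (𝓝[<] b) (𝓝 0) := by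
    have h := (hO.mul (isBigO_refl (fun x => (Δ x)⁻¹) _)).trans_tendsto
      (hΔ.congr' (by filter_upwards [hlb] with x hx; field_simp [(hpos x hx).ne']))
    simpa only [div_eq_mul_inv] using h
  have hint := eventually_integrableOn_Icc_of_tendsto_nhdsLT hl hf_cont hf0
  have hG0 : Tendsto (fun x => Δ x * exp (z x)) (𝓝[<] b) (𝓝 0) :=
    ((isBigO_refl Δ _).mul hO).trans_tendsto (by simpa using hΔ.mul (hΔ.pow 2))
  have hF' : ∀ᶠ x in 𝓝[<] b, HasDerivAt (fun x => ∫ t in x..b, exp (z t) / Δ t)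
      (-(exp (z x) / Δ x)) x := by
    filter_upwards [hint, hlb] with x hxint hx
    exact integral_hasDerivAt_left
      ((intervalIntegrable_iff_integrableOn_Icc_of_le hx.2.le).mpr hxint)
      (hf_cont.stronglyMeasurableAtFilter isOpen_Ioo x hx)
      (hf_cont.continuousAt (Ioo_mem_nhds hx.1 hx.2))
  have hG' : ∀ x ∈ Ioo l b, HasDerivAt (fun x => Δ x * exp (z x))
      (exp (z x) * (Δ x * φ x - k) / Δ x) x := by
    intro x hx
    refine ((hΔ' x hx).mul (hz' x hx).exp).congr_deriv ?_
    field_simp [(hpos x hx).ne']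
    ring
  have hsmall : ∀ᶠ x in 𝓝[<] b, Δ x * φ x < k := hΔφ.eventually_lt_const hk
  have hratio : Tendsto (fun x => -(exp (z x) / Δ x) / (exp (z x) * (Δ x * φ x - k) / Δ x))
      (𝓝[<] b) (𝓝 k⁻¹) := by
    have h : Tendsto (fun x => (k - Δ x * φ x)⁻¹) (𝓝[<] b) (𝓝 (k - 0)⁻¹) :=
      (tendsto_const_nhds.sub hΔφ).inv₀ (by simpa using hk.ne')
    rw [sub_zero] at h
    refine h.congr' ?_
    filter_upwards [hlb, hsmall] with x hx hxk
    field_simp [(hpos x hx).ne', (sub_pos.2 hxk).ne', (sub_neg.2 hxk).ne]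
    ring
  refine HasDerivAt.lhopital_zero_nhdsLT hF' (eventually_of_mem hlb hG') ?_
    (tendsto_integral_nhdsLT_of_integrableOn hint) hG0 hratio
  filter_upwards [hlb, hsmall] with x hx hxk
  exact div_ne_zero (mul_ne_zero (exp_ne_zero _) (sub_neg.2 hxk).ne) (hpos x hx).ne'

end

theorem stmt_3_general (a b c σ J : ℝ) (Δ : ℝ → ℝ)
    (hab : a < b)
    (hΔ : ContDiffOn ℝ 1 Δ (Icc a b))
    (hΔb : Δ b = 0)
    (hΔpos : ∀ θ ∈ Ioo a b, 0 < Δ θ)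
    (hc : c ∈ Ioo a b) (hσ : 0 < σ)
    (z : ℝ → ℝ)
    (hz : ∀ x, z x = -(2 / σ ^ 2) * ∫ s in c..x, ((Δ s) ^ 2)⁻¹)
    (Q : ℝ → ℝ)
    (hQ : ∀ x, Q x = (2 * J / σ ^ 2) * Real.exp (-(z x)) *
      ∫ t in x..b, Real.exp (z t) / Δ t) :
    Tendsto (fun x => Q x / Δ x) (𝓝[<] b) (𝓝 J) := by
  have hz' : ∀ x ∈ Ioo a b, HasDerivAt z (-(2 / σ ^ 2) / Δ x ^ 2) x := fun x hx => by
    have hg : ContinuousOn (fun s => (Δ s ^ 2)⁻¹) (Ioo a b) :=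
      ((hΔ.continuousOn.mono Ioo_subset_Icc_self).pow 2).inv₀
        fun s hs => pow_ne_zero 2 (hΔpos s hs).ne'
    rw [show z = _ from funext hz]
    exact ((hasDerivAt_integral_of_continuousOn_Ioo hg hc hx).const_mul _).congr_deriv
      (div_eq_mul_inv _ _).symm
  have hb : b ∈ Icc a b := right_mem_Icc.2 hab.le
  have hIcc : Icc a b ∈ 𝓝[<] b := Icc_mem_nhdsLT hab
  have hΔ0 : Tendsto Δ (𝓝[<] b) (𝓝 0) :=
    hΔb ▸ ((hΔ.continuousOn b hb).mono_of_mem_nhdsWithin hIcc).tendsto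
  have hΔ'_cont := hΔ.continuousOn_derivWithin (uniqueDiffOn_Icc hab) le_rfl
  have hΔΔ' : Tendsto (fun x => Δ x * derivWithin Δ (Icc a b) x) (𝓝[<] b) (𝓝 0) := by
    simpa using hΔ0.mul ((hΔ'_cont b hb).mono_of_mem_nhdsWithin hIcc).tendsto
  have hΔ' : ∀ x ∈ Ioo a b, HasDerivAt Δ (derivWithin Δ (Icc a b) x) x := fun x hx =>
    (hΔ.differentiableOn one_ne_zero).hasDerivAt_derivWithin (Icc_mem_nhds hx.1 hx.2)
  have key := tendsto_integral_exp_div_div_mul_exp hab (by positivity) hΔ' hz' hΔpos hΔ0 hΔΔ'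
  have hJ : 2 * J / σ ^ 2 * (2 / σ ^ 2)⁻¹ = J := by field_simp
  refine hJ ▸ (key.const_mul (2 * J / σ ^ 2)).congr' ?_
  filter_upwards [Ioo_mem_nhdsLT hab] with x hx
  rw [hQ, exp_neg]
  field_simp [(hΔpos x hx).ne']

/-- Under the stated hypotheses, the ratio `Q(x)/Δ(x)` tends to `J`
as `x → b⁻`. -/
theorem stmt_3 (a b c σ J : ℝ) (Δ : ℝ → ℝ)
    (hab : a < b)
    (hΔ : ContDiffOn ℝ 1 Δ (Icc a b))
    (hΔa : Δ a = 0) (hΔb : Δ b = 0)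
    (hΔpos : ∀ θ ∈ Ioo a b, 0 < Δ θ)
    (hc : c ∈ Ioo a b) (hσ : 0 < σ)
    (z : ℝ → ℝ)
    (hz : ∀ x, z x = -(2 / σ ^ 2) * ∫ s in c..x, ((Δ s) ^ 2)⁻¹)
    (Q : ℝ → ℝ)
    (hQ : ∀ x, Q x = (2 * J / σ ^ 2) * Real.exp (-(z x)) *
      ∫ t in x..b, Real.exp (z t) / Δ t) :
    Tendsto (fun x => Q x / Δ x) (𝓝[<] b) (𝓝 J) :=
  stmt_3_general a b c σ J Δ hab hΔ hΔb hΔpos hc hσ z hz Q hQ
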